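/- Let T be a tournament (complete asymmetric directed graph) on a finite set Ω of candidates with at least two elements, and let A be a candidate that wins every balanced agenda under T. Then A beats every other candidate in T, and consequently A wins every agenda (balanced or not) under T. -/

import Mathlib

open scoped Classical

/-- An agenda: a binary tree whose leaves are labelled with candidates. -/
inductive Agenda (α : Type) : Type
  | leaf (a : α) : Agenda α
  | node (l r : Agenda α) : Agenda α

namespace Agenda

/-- The list of leaf labels of an agenda. -/
def leaves {α : Type} : Agenda α → List α
  | leaf a => [a]
  | node l r => leaves l ++ leaves r

/-- The list of depths of the leaves of an agenda. -/
def depths {α : Type} : Agenda α → List ℕ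
  | leaf _ => [0]
  | node l r => (depths l ++ depths r).map (· + 1)

end Agenda

/-- A valid agenda: leaves labelled bijectively with the candidates. -/
def IsAgenda {α : Type} [Fintype α] (t : Agenda α) : Prop :=
  t.leaves.Nodup ∧ ∀ a : α, a ∈ t.leaves

/-- A balanced agenda: max and min leaf depths differ by at most 1. -/
def IsBalanced {α : Type} (t : Agenda α) : Prop :=
  ∀ d₁ ∈ t.depths, ∀ d₂ ∈ t.depths, d₁ ≤ d₂ + 1

/-- A tournament: complete asymmetric directed graph on the candidates. -/
def IsTournament {α : Type} (T : α → α → Prop) : Prop :=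
  (∀ a, ¬ T a a) ∧ ∀ a b : α, a ≠ b → (T a b ↔ ¬ T b a)

/-- Winner of an agenda under a tournament: each internal node is won by
whichever child's winner beats the other; the root's candidate wins. -/
noncomputable def winner {α : Type} (T : α → α → Prop) : Agenda α → α
  | .leaf a => a
  | .node l r => if T (winner T l) (winner T r) then winner T l else winner T r

/-- Strict partial order: asymmetric and transitive. -/
def IsSPO {α : Type} (r : α → α → Prop) : Prop :=
  (∀ a b, r a b → ¬ r b a) ∧ (∀ a b c, r a b → r b c → r a c)

/-- Strict total order. -/
def IsSTO {α : Type} (r : α → α → Prop) : Prop :=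
  IsSPO r ∧ ∀ a b : α, a ≠ b → r a b ∨ r b a

/-- An (incomplete) weighted profile: a finite sequence of agents, each with a
positive weight and a strict partial order, the sum of weights being odd. -/
structure Profile (α : Type) where
  agents : List (ℕ × (α → α → Prop))
  pos : ∀ p ∈ agents, 0 < p.1
  spo : ∀ p ∈ agents, IsSPO p.2
  oddSum : Odd (agents.map Prod.fst).sum

/-- Total weight of agents preferring `a` to `b`. -/
noncomputable def prefWeight {α : Type} (P : Profile α) (a b : α) : ℕ :=
  (P.agents.map (fun p => if p.2 a b then p.1 else 0)).sum

/-- The majority graph of a profile. -/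
def maj {α : Type} (P : Profile α) (a b : α) : Prop :=
  prefWeight P b a < prefWeight P a b

/-- `Q` is a completion of `P`: same weights, each agent's partial order is
replaced by a strict total order extending it. -/
def IsCompletion {α : Type} (P Q : Profile α) : Prop :=
  List.Forall₂ (fun p q => p.1 = q.1 ∧ IsSTO q.2 ∧ ∀ a b, p.2 a b → q.2 a b)
    P.agents Q.agents

/-- `T` extends the (incomplete majority) graph `G`. -/
def Extends {α : Type} (G T : α → α → Prop) : Prop := ∀ a b, G a b → T a b

/-- `A` wins some agenda under `T`. -/
def WinsSome {α : Type} [Fintype α] (T : α → α → Prop) (A : α) : Prop :=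
  ∃ t : Agenda α, IsAgenda t ∧ winner T t = A

/-- `A` wins every agenda under `T`. -/
def WinsAll {α : Type} [Fintype α] (T : α → α → Prop) (A : α) : Prop :=
  ∀ t : Agenda α, IsAgenda t → winner T t = A

/-- `A` wins some balanced agenda under `T`. -/
def FWinsSome {α : Type} [Fintype α] (T : α → α → Prop) (A : α) : Prop :=
  ∃ t : Agenda α, IsAgenda t ∧ IsBalanced t ∧ winner T t = A

/-- `A` wins every balanced agenda under `T`. -/
def FWinsAll {α : Type} [Fintype α] (T : α → α → Prop) (A : α) : Prop :=
  ∀ t : Agenda α, IsAgenda t → IsBalanced t → winner T t = A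

/-- Weak possible winner of a profile. -/
def WPp {α : Type} [Fintype α] (P : Profile α) (A : α) : Prop :=
  ∃ Q : Profile α, IsCompletion P Q ∧ WinsSome (maj Q) A

/-- Strong possible winner of a profile. -/
def SPp {α : Type} [Fintype α] (P : Profile α) (A : α) : Prop :=
  ∀ Q : Profile α, IsCompletion P Q → WinsSome (maj Q) A

/-- Weak Condorcet winner of a profile. -/
def WCp {α : Type} [Fintype α] (P : Profile α) (A : α) : Prop :=
  ∃ Q : Profile α, IsCompletion P Q ∧ WinsAll (maj Q) A

/-- Strong Condorcet winner of a profile. -/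
def SCp {α : Type} [Fintype α] (P : Profile α) (A : α) : Prop :=
  ∀ Q : Profile α, IsCompletion P Q → WinsAll (maj Q) A

/-- Weak possible winner of an incomplete majority graph. -/
def WPg {α : Type} [Fintype α] (G : α → α → Prop) (A : α) : Prop :=
  ∃ T : α → α → Prop, IsTournament T ∧ Extends G T ∧ WinsSome T A

/-- Strong possible winner of an incomplete majority graph. -/
def SPg {α : Type} [Fintype α] (G : α → α → Prop) (A : α) : Prop :=
  ∀ T : α → α → Prop, IsTournament T → Extends G T → WinsSome T A

/-- Weak Condorcet winner of an incomplete majority graph. -/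
def WCg {α : Type} [Fintype α] (G : α → α → Prop) (A : α) : Prop :=
  ∃ T : α → α → Prop, IsTournament T ∧ Extends G T ∧ WinsAll T A

/-- Strong Condorcet winner of an incomplete majority graph. -/
def SCg {α : Type} [Fintype α] (G : α → α → Prop) (A : α) : Prop :=
  ∀ T : α → α → Prop, IsTournament T → Extends G T → WinsAll T A

/-- A profile is unweighted if every agent has weight 1. -/
def IsUnweighted {α : Type} (P : Profile α) : Prop :=
  ∀ p ∈ P.agents, p.1 = 1

/-- `Q` is the unweighted profile corresponding to `P`: each agent of
weight `k` is replaced by `k` agents of weight 1 with the same order. -/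
def IsUnwVersion {α : Type} (P Q : Profile α) : Prop :=
  Q.agents = P.agents.flatMap (fun p => List.replicate p.1 (1, p.2))

/-- Fair strong Condorcet winner of a profile (balanced agendas only). -/
def FSCp {α : Type} [Fintype α] (P : Profile α) (A : α) : Prop :=
  ∀ Q : Profile α, IsCompletion P Q → FWinsAll (maj Q) A

/-- Fair weak Condorcet winner of a profile (balanced agendas only). -/
def FWCp {α : Type} [Fintype α] (P : Profile α) (A : α) : Prop :=
  ∃ Q : Profile α, IsCompletion P Q ∧ FWinsAll (maj Q) A

/-- Fair weak possible winner of a profile (balanced agendas only). -/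
def FWPp {α : Type} [Fintype α] (P : Profile α) (A : α) : Prop :=
  ∃ Q : Profile α, IsCompletion P Q ∧ FWinsSome (maj Q) A

/-!
If `B` beats `A`, list the candidates as `A, B, …` and build the knockout bracket that halves the
list at every node. It is balanced (every leaf depth lies between `⌊log₂ n⌋` and `⌈log₂ n⌉`) and
`A` meets `B` in its first match, so `A` does not win it. Conversely, a candidate that beats every
other one wins every match it plays, hence every agenda.
-/
theorem Nat.clog_le_log_add_one (n : ℕ) : Nat.clog 2 n ≤ Nat.log 2 n + 1 :=
  Nat.clog_le_of_le_pow (Nat.lt_pow_succ_log_self (by norm_num) n).le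

namespace Agenda

variable {α : Type}

/-- `d` only labels the leaf of the empty list. -/
def ofList (d : α) (l : List α) : Agenda α :=
  if 2 ≤ l.length then
    node (ofList d (l.take ((l.length + 1) / 2))) (ofList d (l.drop ((l.length + 1) / 2)))
  else leaf (l.headD d)
termination_by l.length
decreasing_by all_goals simp only [List.length_take, List.length_drop]; omega

theorem leaves_ofList (d : α) {l : List α} (hl : l ≠ []) : (ofList d l).leaves = l := by
  fun_induction ofList d l with
  | case1 l h ihl ihr =>
    rw [leaves, ihl (by simp; omega), ihr (by simp; omega), List.take_append_drop]
  | case2 l h =>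
    have hlen : l.length = 1 := by have := List.length_pos_iff.mpr hl; omega
    obtain ⟨a, rfl⟩ := List.length_eq_one_iff.mp hlen
    rfl

theorem mem_depths_ofList (d : α) (l : List α) :
    ∀ k ∈ (ofList d l).depths, Nat.log 2 l.length ≤ k ∧ k ≤ Nat.clog 2 l.length := by
  fun_induction ofList d l with
  | case1 l h ihl ihr =>
    set n := l.length
    have hlog : Nat.log 2 n = Nat.log 2 (n / 2) + 1 := by
      have := Nat.log_pos (b := 2) (by norm_num) h
      rw [← Nat.sub_add_cancel this, ← Nat.log_div_base]
    have hclog : Nat.clog 2 n = Nat.clog 2 ((n + 1) / 2) + 1 := Nat.clog_of_two_le (by norm_num) h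
    have hhalf : Nat.log 2 (n / 2) ≤ Nat.log 2 ((n + 1) / 2) := Nat.log_mono_right (by omega)
    have hhalf' : Nat.clog 2 (n / 2) ≤ Nat.clog 2 ((n + 1) / 2) := Nat.clog_mono_right _ (by omega)
    simp only [depths, List.mem_map, List.mem_append]
    rintro _ ⟨k, hk | hk, rfl⟩
    · have := ihl k hk
      rw [List.length_take, min_eq_left (by omega)] at this
      omega
    · have := ihr k hk
      rw [List.length_drop, show n - (n + 1) / 2 = n / 2 by omega] at this
      omega
  | case2 l h =>
    simp only [depths, List.mem_singleton, forall_eq]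
    simp [Nat.log_of_lt (show l.length < 2 by omega)]

theorem isBalanced_ofList (d : α) (l : List α) : IsBalanced (ofList d l) := by
  intro k₁ hk₁ k₂ hk₂
  have := mem_depths_ofList d l k₁ hk₁
  have := mem_depths_ofList d l k₂ hk₂
  have := Nat.clog_le_log_add_one l.length
  omega

theorem isAgenda_ofList [Fintype α] (d : α) {l : List α} (hnd : l.Nodup) (hmem : ∀ a, a ∈ l) :
    IsAgenda (ofList d l) := by
  rw [IsAgenda, leaves_ofList d (List.ne_nil_of_mem (hmem d))]
  exact ⟨hnd, hmem⟩

theorem winner_mem_leaves (T : α → α → Prop) (t : Agenda α) : winner T t ∈ t.leaves := by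
  induction t with
  | leaf a => exact List.mem_singleton_self a
  | node l r ihl ihr =>
    rw [winner, leaves]
    split
    · exact List.mem_append_left _ ihl
    · exact List.mem_append_right _ ihr

theorem winner_node_ne_of_left {T : α → α → Prop} {l r : Agenda α} {a : α}
    (hl : winner T l ≠ a) (ha : a ∉ r.leaves) : winner T (node l r) ≠ a := by
  rw [winner]
  split
  · exact hl
  · exact fun h => ha (h ▸ winner_mem_leaves T r)

theorem winner_ofList_ne {T : α → α → Prop} (d : α) {l : List α} {a b : α} (hnd : l.Nodup)
    (hab : [a, b] <+: l) (hnab : ¬ T a b) : winner T (ofList d l) ≠ a := by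
  -- `a` and `b` stay in the first half until they meet in the first round, where `b` wins.
  fun_induction ofList d l with
  | case1 l h ihl ihr =>
    by_cases hm : 2 ≤ (l.length + 1) / 2
    · have hab' : [a, b] <+: l.take ((l.length + 1) / 2) := by
        have := hab.take ((l.length + 1) / 2)
        rwa [List.take_of_length_le (by simpa using hm)] at this
      refine winner_node_ne_of_left (ihl (hnd.sublist (List.take_sublist _ _)) hab') ?_
      rw [leaves_ofList]
      · exact List.disjoint_of_nodup_append (by rwa [List.take_append_drop]) (hab'.subset (by simp))
      · simp only [ne_eq, List.drop_eq_nil_iff]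
        omega
    · obtain rfl : [a, b] = l := hab.eq_of_length (by simp; omega)
      have hba : b ≠ a := fun h => by simp [h] at hnd
      simp [ofList, winner, hnab, hba]
  | case2 l h => exact absurd hab.length_le (by simp; omega)

theorem winner_eq_of_beats {T : α → α → Prop} (hT : IsTournament T) {a : α}
    (ha : ∀ b, b ≠ a → T a b) {t : Agenda α} (hat : a ∈ t.leaves) : winner T t = a := by
  induction t with
  | leaf c => simpa [leaves, winner, eq_comm] using hat
  | node l r ihl ihr =>
    rw [leaves, List.mem_append] at hat
    rw [winner]
    rcases hat with hal | har
    · rw [ihl hal]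
      split_ifs with hbeat
      · rfl
      · by_contra hne
        exact hbeat (ha _ hne)
    · rw [ihr har]
      split_ifs with hbeat
      · by_contra hne
        exact (hT.2 a _ (Ne.symm hne)).mp (ha _ hne) hbeat
      · rfl

end Agenda

open Agenda

theorem beats_of_fWinsAll {α : Type} [Fintype α] {T : α → α → Prop} {A : α} (hA : FWinsAll T A) :
    ∀ B, B ≠ A → T A B := by
  intro B hBA
  by_contra hAB
  let l := A :: B :: ((Finset.univ.erase A).erase B).toList
  have hnd : l.Nodup := by simp [l, hBA.symm, Finset.nodup_toList]
  have hmem : ∀ a, a ∈ l := by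
    intro a
    by_cases a = A <;> by_cases a = B <;> simp_all [l]
  exact winner_ofList_ne A hnd (by simp [l]) hAB
    (hA _ (isAgenda_ofList A hnd hmem) (isBalanced_ofList A l))

theorem winsAll_of_beats {α : Type} [Fintype α] {T : α → α → Prop} (hT : IsTournament T) {A : α}
    (hA : ∀ B, B ≠ A → T A B) : WinsAll T A :=
  fun _ ht => winner_eq_of_beats hT hA (ht.2 A)

theorem stmt15_general {α : Type} [Fintype α] (T : α → α → Prop) (hT : IsTournament T)
    (A : α) (hA : FWinsAll T A) :
    (∀ B : α, B ≠ A → T A B) ∧ WinsAll T A :=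
  have hbeats := beats_of_fWinsAll hA
  ⟨hbeats, winsAll_of_beats hT hbeats⟩

/-- If a tournament `T` on at least two candidates has a
candidate `A` winning every balanced agenda, then `A` beats every other
candidate in `T`, and hence `A` wins every agenda. -/
theorem stmt15 {α : Type} [Fintype α] (T : α → α → Prop) (hT : IsTournament T)
    (hcard : 2 ≤ Fintype.card α) (A : α) (hA : FWinsAll T A) :
    (∀ B : α, B ≠ A → T A B) ∧ WinsAll T A :=
  stmt15_general T hT A hA
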